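/- Let G be a finite simple graph on vertex set V and let B be a zero forcing set of G with |B| = |V| − k. Then there exists a Z-sequence (v_1,…,v_k) of G together with a witness sequence (w_1,…,w_k) such that {w_1,…,w_k} = V \ B. -/

import Mathlib

/-- One step of the zero forcing colour-change rule: some black vertex `v ∈ S`
whose unique white neighbour is `w` forces `w`, giving `T = insert w S`. -/
def zfStep {V : Type*} [DecidableEq V] (G : SimpleGraph V) (S T : Finset V) : Prop :=
  ∃ v ∈ S, ∃ w, w ∉ S ∧ G.Adj v w ∧ (∀ u, G.Adj v u → u ∉ S → u = w) ∧ T = insert w S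

/-- `S` is a zero forcing set: iterating the colour-change rule from `S` reaches all of `V`. -/
def IsZeroForcingSet {V : Type*} [DecidableEq V] [Fintype V] (G : SimpleGraph V)
    (S : Finset V) : Prop :=
  Relation.ReflTransGen (zfStep G) S Finset.univ

/-- The zero forcing number: minimum size of a zero forcing set. -/
noncomputable def zeroForcingNumber {V : Type*} [DecidableEq V] [Fintype V]
    (G : SimpleGraph V) : ℕ :=
  sInf {k | ∃ S : Finset V, IsZeroForcingSet G S ∧ S.card = k}

/-- `(v 0, …, v (k-1))` is a Z-sequence: each `v i` has a neighbour outside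
`⋃_{j<i} N[v j]`. -/
def IsZSeq {V : Type*} (G : SimpleGraph V) {k : ℕ} (v : Fin k → V) : Prop :=
  ∀ i : Fin k, ∃ x, G.Adj (v i) x ∧ ∀ j : Fin k, j < i → x ≠ v j ∧ ¬ G.Adj (v j) x

/-- `w` is a witness sequence for the Z-sequence `v`: each `w i` is a neighbour of `v i`
lying outside `⋃_{j<i} N[v j]`. -/
def IsWitnessSeq {V : Type*} (G : SimpleGraph V) {k : ℕ} (v w : Fin k → V) : Prop :=
  ∀ i : Fin k, G.Adj (v i) (w i) ∧ ∀ j : Fin k, j < i → w i ≠ v j ∧ ¬ G.Adj (v j) (w i)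

/-- The Z-Grundy domination number: maximum length of a Z-sequence. -/
noncomputable def zGrundyNumber {V : Type*} [Fintype V] (G : SimpleGraph V) : ℕ :=
  sSup {k | ∃ v : Fin k → V, IsZSeq G v}

/-!
Record a forcing process from `B` as the list of forces `(v i → w i)`, in chronological order.
This is a Z-sequence witnessed by the forced vertices: when `v j` forces, `w j` is its only
white neighbour, so every vertex `w i` forced later is neither `v j` (already black) nor a
neighbour of `v j`. The forced vertices are exactly `V \ B`.
-/

theorem image_fin_cons_univ {V : Type*} [DecidableEq V] {k : ℕ} (a : V) (w : Fin k → V) :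
    Finset.image (Fin.cons a w : Fin (k + 1) → V) Finset.univ
      = insert a (Finset.image w Finset.univ) := by
  apply Finset.coe_injective
  push_cast
  simp [Fin.range_cons]

namespace IsWitnessSeq

variable {V : Type*} {G : SimpleGraph V} {k : ℕ} {v w : Fin k → V}

theorem isZSeq (h : IsWitnessSeq G v w) : IsZSeq G v :=
  fun i => ⟨w i, h i⟩

theorem injective (h : IsWitnessSeq G v w) : Function.Injective w := by
  have hne : ∀ i j, j < i → w i ≠ w j := fun i j hji hij =>
    ((h i).2 j hji).2 (hij ▸ (h j).1)
  intro i j hij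
  by_contra hij'
  rcases Ne.lt_or_gt hij' with hlt | hlt
  · exact hne j i hlt hij.symm
  · exact hne i j hlt hij

theorem cons {v₀ w₀ : V} (h₀ : G.Adj v₀ w₀) (hfresh : ∀ i, w i ≠ v₀ ∧ ¬ G.Adj v₀ (w i))
    (h : IsWitnessSeq G v w) :
    IsWitnessSeq G (Fin.cons v₀ v : Fin (k + 1) → V) (Fin.cons w₀ w) := by
  intro i
  refine Fin.cases ⟨h₀, fun j hj => absurd hj (Fin.not_lt_zero j)⟩ (fun i => ?_) i
  refine ⟨by simpa using (h i).1, fun j => Fin.cases (fun _ => by simpa using hfresh i)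
    (fun j hj => ?_) j⟩
  simpa using (h i).2 j (Fin.succ_lt_succ_iff.mp hj)

end IsWitnessSeq

section ZeroForcing

variable {V : Type*} [DecidableEq V] {G : SimpleGraph V} {S T : Finset V}

theorem zfStep_le_subset : zfStep G ≤ (· ⊆ ·) := by
  rintro S _ ⟨-, -, w, -, -, -, rfl⟩
  exact Finset.subset_insert w S

theorem subset_of_reflTransGen_zfStep (h : Relation.ReflTransGen (zfStep G) S T) : S ⊆ T := by
  have h' := Relation.ReflTransGen.mono zfStep_le_subset _ _ h
  rwa [Relation.reflTransGen_eq_self] at h'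

theorem exists_witnessSeq_of_reflTransGen_zfStep (h : Relation.ReflTransGen (zfStep G) S T) :
    ∃ (k : ℕ) (v w : Fin k → V), IsWitnessSeq G v w ∧ Finset.image w Finset.univ = T \ S := by
  induction h using Relation.ReflTransGen.head_induction_on with
  | refl => exact ⟨0, Fin.elim0, Fin.elim0, fun i => i.elim0, by simp⟩
  | @head S _ hstep htail ih =>
    obtain ⟨v₀, hv₀, w₀, hw₀, hadj, hunique, rfl⟩ := hstep
    obtain ⟨k, v, w, hvw, himage⟩ := ih
    have hwhite : ∀ i, w i ∈ T ∧ w i ≠ w₀ ∧ w i ∉ S := fun i => by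
      simpa [himage] using Finset.mem_image_of_mem w (Finset.mem_univ i)
    have hfresh : ∀ i, w i ≠ v₀ ∧ ¬ G.Adj v₀ (w i) := fun i =>
      ⟨fun h => (hwhite i).2.2 (h ▸ hv₀),
        fun hadj' => (hwhite i).2.1 (hunique _ hadj' (hwhite i).2.2)⟩
    have hw₀T : w₀ ∈ T := subset_of_reflTransGen_zfStep htail (Finset.mem_insert_self w₀ S)
    refine ⟨k + 1, Fin.cons v₀ v, Fin.cons w₀ w, hvw.cons hadj hfresh, ?_⟩
    rw [image_fin_cons_univ, himage]
    grind

end ZeroForcing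

/-- If `B` is a zero forcing set of `G` with `|B| = |V| - k`, then there is a Z-sequence
`(v 0, …, v (k-1))` with a witness sequence `(w 0, …, w (k-1))` whose set of witnesses
is exactly `V \ B`. -/
theorem exists_zSeq_of_zeroForcingSet {V : Type*} [Fintype V] [DecidableEq V]
    (G : SimpleGraph V) (B : Finset V) (k : ℕ)
    (hB : IsZeroForcingSet G B) (hcard : B.card + k = Fintype.card V) :
    ∃ (v w : Fin k → V), IsZSeq G v ∧ IsWitnessSeq G v w ∧
      Finset.image w Finset.univ = Finset.univ \ B := by
  obtain ⟨m, v, w, hvw, himage⟩ := exists_witnessSeq_of_reflTransGen_zfStep hB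
  obtain rfl : m = k := by
    have hm := congrArg Finset.card himage
    rw [Finset.card_image_of_injective _ hvw.injective, Finset.card_univ, Fintype.card_fin,
      Finset.card_univ_sdiff] at hm
    omega
  exact ⟨v, w, hvw.isZSeq, hvw, himage⟩
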